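/- arXiv:2603.28700 — 5 statements merged into one kernel-verified Lean document; each statement's English description precedes it below -/
import Mathlib

section
/- For nonnegative reals x_1,...,x_n and 1 ≤ k ≤ n, the normalized elementary symmetric function satisfies E_k(x_1,...,x_n) ≤ (E_1(x_1,...,x_n))^k, where E_k = e_k / C(n,k) and e_k is the k-th elementary symmetric polynomial. Equivalently, e_k(x_1,...,x_n)/C(n,k) ≤ ((x_1+...+x_n)/n)^k. -/
open Finset

lemma tangent_pow (k : ℕ) (t u : ℝ) (ht : 0 ≤ t) (hu : 0 ≤ u) :
    ((k:ℝ)+1) * t^k * (u - t) ≤ u^(k+1) - t^(k+1) := by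
  rcases eq_or_lt_of_le ht with h0 | hpos
  · rcases Nat.eq_zero_or_pos k with rfl | hk
    · simp [← h0]
    · rw [← h0]
      rw [zero_pow (by omega : k ≠ 0), zero_pow (by omega : k + 1 ≠ 0)]
      have : (0:ℝ) ≤ u^(k+1) := pow_nonneg hu _
      nlinarith
  · have hb := one_add_mul_le_pow (a := u/t - 1) (by nlinarith [div_nonneg hu ht] : (-2:ℝ) ≤ u/t - 1) (k+1)
    have h1 : (1 + (u/t - 1)) = u/t := by ring
    rw [h1] at hb
    have htk : (0:ℝ) < t^(k+1) := pow_pos hpos _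
    have hmul := mul_le_mul_of_nonneg_right hb htk.le
    have hdiv : (u/t)^(k+1) * t^(k+1) = u^(k+1) := by
      rw [div_pow, div_mul_cancel₀]
      exact htk.ne'
    rw [hdiv] at hmul
    have htt : (u/t - 1) * t = u - t := by field_simp
    have hsplit : (1 + (↑(k+1):ℝ) * (u/t - 1)) * t^(k+1)
        = t^(k+1) + ((k:ℝ)+1) * ((u/t - 1)*t) * t^k := by push_cast; ring
    rw [htt] at hsplit
    rw [hsplit] at hmul
    push_cast at hmul
    linarith

lemma core_ineq (n k : ℕ) (hn : 1 ≤ n) (hkn : k + 1 ≤ n + 1) (T a : ℝ)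
    (hT : 0 ≤ T) (ha : 0 ≤ a) :
    (n.choose (k+1) : ℝ) * (T/n)^(k+1) + a * (n.choose k) * (T/n)^k
      ≤ ((n+1).choose (k+1) : ℝ) * ((T+a)/(n+1))^(k+1) := by
  have hn0 : (n:ℝ) ≠ 0 := Nat.cast_ne_zero.mpr (by omega)
  have hn1 : ((n:ℝ)+1) ≠ 0 := by positivity
  set t : ℝ := T / n with ht_def
  set u : ℝ := (T + a) / (n+1) with hu_def
  have ht : 0 ≤ t := div_nonneg hT (by positivity)
  have hu : 0 ≤ u := div_nonneg (by linarith) (by positivity)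
  have haeq : a = ((n:ℝ)+1) * u - n * t := by
    rw [hu_def, ht_def]; field_simp; ring
  -- Pascal
  have hpascal : (((n+1).choose (k+1) : ℕ) : ℝ) = (n.choose k : ℝ) + (n.choose (k+1) : ℝ) := by
    rw [Nat.choose_succ_succ]; push_cast; ring
  -- k+1 choose relation : (n.choose (k+1)) * (k+1) = n.choose k * (n - k)
  have hkey : (n.choose (k+1) : ℝ) * ((k:ℝ)+1) = (n.choose k : ℝ) * ((n:ℝ) - k) := by
    have h := Nat.choose_succ_right_eq n k
    have hcast : ((n - k : ℕ) : ℝ) = (n:ℝ) - k := by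
      rw [Nat.cast_sub (by omega)]
    calc (n.choose (k+1) : ℝ) * ((k:ℝ)+1) = ((n.choose (k+1) * (k+1) : ℕ) : ℝ) := by push_cast; ring
      _ = ((n.choose k * (n - k) : ℕ) : ℝ) := by rw [h]
      _ = (n.choose k : ℝ) * ((n:ℝ) - k) := by push_cast [hcast]; ring
  have htg := tangent_pow k t u ht hu
  have hA : (0:ℝ) ≤ (n.choose (k+1) : ℝ) := by positivity
  have hB : (0:ℝ) ≤ (n.choose k : ℝ) := by positivity
  have hAtg := mul_le_mul_of_nonneg_left htg hA
  have hBtg := mul_le_mul_of_nonneg_left htg hB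
  have h0 : ((n.choose (k+1) : ℝ) * ((k:ℝ)+1) - (n.choose k : ℝ) * ((n:ℝ) - k))
      * (t^k * (u - t)) = 0 := by rw [hkey]; ring
  rw [hpascal, haeq]
  have hpk : t^(k+1) = t^k * t := by ring
  nlinarith [hAtg, hBtg, h0]

lemma maclaurin_aux {ι : Type*} [DecidableEq ι] (x : ι → ℝ) (hx : ∀ i, 0 ≤ x i)
    (s : Finset ι) : ∀ k : ℕ,
    (∑ A ∈ s.powersetCard k, ∏ i ∈ A, x i)
      ≤ (s.card.choose k : ℝ) * ((∑ i ∈ s, x i) / s.card) ^ k := by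
  induction s using Finset.cons_induction with
  | empty =>
    intro k
    cases k with
    | zero => simp
    | succ k => rw [Finset.powersetCard_eq_empty.mpr (by simp)]; simp
  | cons a s ha ih =>
    intro k
    have hxa := hx a
    have hT : (0:ℝ) ≤ ∑ i ∈ s, x i := Finset.sum_nonneg fun i _ => hx i
    cases k with
    | zero => simp
    | succ k =>
      rcases s.eq_empty_or_nonempty with rfl | hs
      · -- single element
        rcases Nat.eq_zero_or_pos k with rfl | hk
        · simp [Finset.powersetCard_one]
        · rw [Finset.powersetCard_eq_empty.mpr (by simp; omega)]
          simp only [Finset.sum_empty]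
          have h0 : (0:ℝ) ≤ ∑ i ∈ Finset.cons a ∅ ha, x i := Finset.sum_nonneg fun i _ => hx i
          have : (0:ℝ) ≤ ((∑ i ∈ Finset.cons a ∅ ha, x i) / (#(Finset.cons a ∅ ha) : ℝ)) ^ (k+1) :=
            pow_nonneg (div_nonneg h0 (by positivity)) _
          positivity
      · have hcard : 1 ≤ s.card := Finset.card_pos.mpr hs
        by_cases hkn : k + 1 ≤ s.card + 1
        · rw [Finset.cons_eq_insert, Finset.powersetCard_succ_insert ha,
            Finset.sum_union]
          · have himg : ∑ A ∈ (s.powersetCard k).image (insert a), ∏ i ∈ A, x i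
                = x a * ∑ A ∈ s.powersetCard k, ∏ i ∈ A, x i := by
              rw [Finset.sum_image, Finset.mul_sum]
              · refine Finset.sum_congr rfl fun A hA => ?_
                have haA : a ∉ A := fun h => ha ((Finset.mem_powersetCard.mp hA).1 h)
                rw [Finset.prod_insert haA]
              · intro A hA B hB hAB
                have haA : a ∉ A := fun h => ha ((Finset.mem_powersetCard.mp hA).1 h)
                have haB : a ∉ B := fun h => ha ((Finset.mem_powersetCard.mp hB).1 h)
                have := congrArg (Finset.erase · a) hAB
                simpa [Finset.erase_insert haA, Finset.erase_insert haB] using this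
            rw [himg]
            have h1 := ih (k+1)
            have h2 := ih k
            have h2' := mul_le_mul_of_nonneg_left h2 hxa
            have hcore := core_ineq s.card k hcard hkn (∑ i ∈ s, x i) (x a) hT hxa
            have hsum : ∑ i ∈ insert a s, x i = (∑ i ∈ s, x i) + x a := by
              rw [Finset.sum_insert ha]; ring
            rw [Finset.card_insert_of_notMem ha, hsum]
            push_cast
            calc (∑ A ∈ s.powersetCard (k+1), ∏ i ∈ A, x i)
                  + x a * ∑ A ∈ s.powersetCard k, ∏ i ∈ A, x i
                ≤ (s.card.choose (k+1) : ℝ) * ((∑ i ∈ s, x i) / s.card) ^ (k+1)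
                  + x a * ((s.card.choose k : ℝ) * ((∑ i ∈ s, x i) / s.card) ^ k) := by
                  linarith
              _ ≤ ((s.card+1).choose (k+1) : ℝ) * (((∑ i ∈ s, x i) + x a) / (s.card+1)) ^ (k+1) := by
                  push_cast at hcore ⊢; linarith [hcore]
          · rw [Finset.disjoint_left]
            intro A hA hA'
            obtain ⟨B, hB, rfl⟩ := Finset.mem_image.mp hA'
            exact (fun h => ha ((Finset.mem_powersetCard.mp hA).1 h)) (Finset.mem_insert_self a B)
        · rw [Finset.powersetCard_eq_empty.mpr (by rw [Finset.card_cons]; omega)]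
          simp only [Finset.sum_empty]
          have h0 : (0:ℝ) ≤ ∑ i ∈ Finset.cons a s ha, x i := Finset.sum_nonneg fun i _ => hx i
          have : (0:ℝ) ≤ ((∑ i ∈ Finset.cons a s ha, x i) / (#(Finset.cons a s ha) : ℝ)) ^ (k+1) :=
            pow_nonneg (div_nonneg h0 (by positivity)) _
          positivity


/-- Maclaurin's inequality (special case): the normalized `k`-th elementary symmetric
function of nonnegative reals is at most the `k`-th power of their average. -/
theorem maclaurin_esymm_le_pow_avg (n k : ℕ) (hk : 1 ≤ k) (hkn : k ≤ n)
    (x : Fin n → ℝ) (hx : ∀ i, 0 ≤ x i) :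
    (∑ A ∈ Finset.powersetCard k (Finset.univ : Finset (Fin n)), ∏ i ∈ A, x i) /
      (Nat.choose n k : ℝ) ≤ ((∑ i, x i) / (n : ℝ)) ^ k := by
  have h := maclaurin_aux x hx Finset.univ k
  rw [Finset.card_univ, Fintype.card_fin] at h
  have hc : (0:ℝ) < (n.choose k : ℝ) := by
    exact_mod_cast Nat.choose_pos hkn
  rw [div_le_iff₀ hc]
  linarith [h]
end

section
/- Let F : [0,α] → ℝ be convex with F(0)=0, and let G(x) = 1 - F(x). For 0 ≤ u_1,...,u_n ≤ α with Σ u_i = s ≤ αn, and x_i = G(u_i), the normalized elementary symmetric function satisfies E_k(x_1,...,x_n) ≤ G(s/n)^k for every 1 ≤ k ≤ n. In particular, the maximum of E_k over such tuples is attained when all u_i = s/n. -/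
open Finset Set

namespace MaclaurinAux

variable {n : ℕ}

lemma swap_sum (k : ℕ) (i j : Fin n) (hij : i ≠ j) (z : Fin n → ℝ) :
    ∑ A ∈ (Finset.powersetCard k (Finset.univ : Finset (Fin n))).filter
        (fun A => i ∉ A ∧ j ∈ A), ∏ l ∈ A.erase j, z l
    = ∑ A ∈ (Finset.powersetCard k (Finset.univ : Finset (Fin n))).filter
        (fun A => i ∈ A ∧ j ∉ A), ∏ l ∈ A.erase i, z l := by
  refine Finset.sum_nbij' (fun B => insert i (B.erase j)) (fun A => insert j (A.erase i))
    ?_ ?_ ?_ ?_ ?_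
  · intro B hB
    simp only [Finset.mem_filter, Finset.mem_powersetCard_univ] at hB ⊢
    obtain ⟨hcard, hiB, hjB⟩ := hB
    have hinotin : i ∉ B.erase j := fun h => hiB (Finset.mem_of_mem_erase h)
    refine ⟨?_, Finset.mem_insert_self _ _, ?_⟩
    · have hpos : 0 < B.card := Finset.card_pos.2 ⟨j, hjB⟩
      rw [Finset.card_insert_of_notMem hinotin, Finset.card_erase_of_mem hjB]
      omega
    · simp [Finset.mem_insert, hij.symm]
  · intro A hA
    simp only [Finset.mem_filter, Finset.mem_powersetCard_univ] at hA ⊢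
    obtain ⟨hcard, hiA, hjA⟩ := hA
    have hjnotin : j ∉ A.erase i := fun h => hjA (Finset.mem_of_mem_erase h)
    refine ⟨?_, ?_, Finset.mem_insert_self _ _⟩
    · have hpos : 0 < A.card := Finset.card_pos.2 ⟨i, hiA⟩
      rw [Finset.card_insert_of_notMem hjnotin, Finset.card_erase_of_mem hiA]
      omega
    · simp [Finset.mem_insert, hij]
  · intro B hB
    simp only [Finset.mem_filter, Finset.mem_powersetCard_univ] at hB
    obtain ⟨hcard, hiB, hjB⟩ := hB
    have hinotin : i ∉ B.erase j := fun h => hiB (Finset.mem_of_mem_erase h)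
    show insert j ((insert i (B.erase j)).erase i) = B
    rw [Finset.erase_insert hinotin, Finset.insert_erase hjB]
  · intro A hA
    simp only [Finset.mem_filter, Finset.mem_powersetCard_univ] at hA
    obtain ⟨hcard, hiA, hjA⟩ := hA
    have hjnotin : j ∉ A.erase i := fun h => hjA (Finset.mem_of_mem_erase h)
    show insert i ((insert j (A.erase i)).erase j) = A
    rw [Finset.erase_insert hjnotin, Finset.insert_erase hiA]
  · intro B hB
    simp only [Finset.mem_filter, Finset.mem_powersetCard_univ] at hB
    obtain ⟨hcard, hiB, hjB⟩ := hB
    have hinotin : i ∉ B.erase j := fun h => hiB (Finset.mem_of_mem_erase h)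
    show ∏ l ∈ B.erase j, z l = ∏ l ∈ (insert i (B.erase j)).erase i, z l
    rw [Finset.erase_insert hinotin]

lemma key_step (k : ℕ) (i j : Fin n) (hij : i ≠ j) (x : Fin n → ℝ)
    (hx : ∀ l, 0 ≤ x l) (a b : ℝ)
    (hab : x i * x j ≤ a * b) (habsum : a + b = x i + x j) :
    ∑ A ∈ Finset.powersetCard k (Finset.univ : Finset (Fin n)), ∏ l ∈ A, x l
      ≤ ∑ A ∈ Finset.powersetCard k (Finset.univ : Finset (Fin n)), ∏ l ∈ A,
          (Function.update (Function.update x i a) j b) l := by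
  set y := Function.update (Function.update x i a) j b with hy
  have hyi : y i = a := by
    rw [hy, Function.update_of_ne hij, Function.update_self]
  have hyj : y j = b := by rw [hy, Function.update_self]
  have hyl : ∀ l, l ≠ i → l ≠ j → y l = x l := by
    intro l h1 h2
    rw [hy, Function.update_of_ne h2, Function.update_of_ne h1]
  set S := Finset.powersetCard k (Finset.univ : Finset (Fin n)) with hS
  have hdec : ∀ f : Finset (Fin n) → ℝ, ∑ A ∈ S, f A =
      (∑ A ∈ S.filter (fun A => i ∈ A ∧ j ∈ A), f A
        + ∑ A ∈ S.filter (fun A => i ∈ A ∧ j ∉ A), f A)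
      + (∑ A ∈ S.filter (fun A => i ∉ A ∧ j ∈ A), f A
        + ∑ A ∈ S.filter (fun A => i ∉ A ∧ j ∉ A), f A) := by
    intro f
    rw [← Finset.sum_filter_add_sum_filter_not S (fun A => i ∈ A) f]
    congr 1
    · rw [← Finset.sum_filter_add_sum_filter_not (S.filter (fun A => i ∈ A))
        (fun A => j ∈ A) f, Finset.filter_filter, Finset.filter_filter]
    · rw [← Finset.sum_filter_add_sum_filter_not (S.filter (fun A => i ∉ A))
        (fun A => j ∈ A) f, Finset.filter_filter, Finset.filter_filter]
  rw [hdec (fun A => ∏ l ∈ A, x l), hdec (fun A => ∏ l ∈ A, y l)]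
  have h00 : ∑ A ∈ S.filter (fun A => i ∉ A ∧ j ∉ A), ∏ l ∈ A, x l
      = ∑ A ∈ S.filter (fun A => i ∉ A ∧ j ∉ A), ∏ l ∈ A, y l := by
    refine Finset.sum_congr rfl fun A hA => ?_
    simp only [Finset.mem_filter] at hA
    refine Finset.prod_congr rfl fun l hl => ?_
    exact (hyl l (fun h => hA.2.1 (h ▸ hl)) (fun h => hA.2.2 (h ▸ hl))).symm
  have h11 : ∑ A ∈ S.filter (fun A => i ∈ A ∧ j ∈ A), ∏ l ∈ A, x l
      ≤ ∑ A ∈ S.filter (fun A => i ∈ A ∧ j ∈ A), ∏ l ∈ A, y l := by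
    refine Finset.sum_le_sum fun A hA => ?_
    simp only [Finset.mem_filter] at hA
    obtain ⟨_, hiA, hjA⟩ := hA
    have hjA' : j ∈ A.erase i := Finset.mem_erase.2 ⟨hij.symm, hjA⟩
    have hrw : ∀ g : Fin n → ℝ, ∏ l ∈ A, g l
        = g i * (g j * ∏ l ∈ (A.erase i).erase j, g l) := by
      intro g
      rw [Finset.mul_prod_erase _ g hjA', Finset.mul_prod_erase _ g hiA]
    rw [hrw x, hrw y, hyi, hyj]
    have hP : ∏ l ∈ (A.erase i).erase j, y l = ∏ l ∈ (A.erase i).erase j, x l := by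
      refine Finset.prod_congr rfl fun l hl => ?_
      have hl' := Finset.mem_erase.1 hl
      have hl'' := Finset.mem_erase.1 hl'.2
      exact hyl l hl''.1 hl'.1
    have hPnn : 0 ≤ ∏ l ∈ (A.erase i).erase j, x l :=
      Finset.prod_nonneg fun l _ => hx l
    rw [hP]
    calc x i * (x j * ∏ l ∈ (A.erase i).erase j, x l)
        = (x i * x j) * ∏ l ∈ (A.erase i).erase j, x l := by ring
      _ ≤ (a * b) * ∏ l ∈ (A.erase i).erase j, x l := by
          exact mul_le_mul_of_nonneg_right hab hPnn
      _ = a * (b * ∏ l ∈ (A.erase i).erase j, x l) := by ring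
  have hmid : ∑ A ∈ S.filter (fun A => i ∈ A ∧ j ∉ A), ∏ l ∈ A, x l
      + ∑ A ∈ S.filter (fun A => i ∉ A ∧ j ∈ A), ∏ l ∈ A, x l
      = ∑ A ∈ S.filter (fun A => i ∈ A ∧ j ∉ A), ∏ l ∈ A, y l
      + ∑ A ∈ S.filter (fun A => i ∉ A ∧ j ∈ A), ∏ l ∈ A, y l := by
    have e10 : ∀ g : Fin n → ℝ, ∑ A ∈ S.filter (fun A => i ∈ A ∧ j ∉ A), ∏ l ∈ A, g l
        = g i * ∑ A ∈ S.filter (fun A => i ∈ A ∧ j ∉ A), ∏ l ∈ A.erase i, g l := by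
      intro g
      rw [Finset.mul_sum]
      refine Finset.sum_congr rfl fun A hA => ?_
      simp only [Finset.mem_filter] at hA
      rw [Finset.mul_prod_erase _ g hA.2.1]
    have e01 : ∀ g : Fin n → ℝ, ∑ A ∈ S.filter (fun A => i ∉ A ∧ j ∈ A), ∏ l ∈ A, g l
        = g j * ∑ A ∈ S.filter (fun A => i ∉ A ∧ j ∈ A), ∏ l ∈ A.erase j, g l := by
      intro g
      rw [Finset.mul_sum]
      refine Finset.sum_congr rfl fun A hA => ?_
      simp only [Finset.mem_filter] at hA
      rw [Finset.mul_prod_erase _ g hA.2.2]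
    have her10 : ∀ g : Fin n → ℝ, (∀ l, l ≠ i → l ≠ j → g l = x l) →
        ∑ A ∈ S.filter (fun A => i ∈ A ∧ j ∉ A), ∏ l ∈ A.erase i, g l
        = ∑ A ∈ S.filter (fun A => i ∈ A ∧ j ∉ A), ∏ l ∈ A.erase i, x l := by
      intro g hg
      refine Finset.sum_congr rfl fun A hA => ?_
      simp only [Finset.mem_filter] at hA
      refine Finset.prod_congr rfl fun l hl => ?_
      have hl' := Finset.mem_erase.1 hl
      exact hg l hl'.1 (fun h => hA.2.2 (h ▸ hl'.2))
    have her01 : ∀ g : Fin n → ℝ, (∀ l, l ≠ i → l ≠ j → g l = x l) →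
        ∑ A ∈ S.filter (fun A => i ∉ A ∧ j ∈ A), ∏ l ∈ A.erase j, g l
        = ∑ A ∈ S.filter (fun A => i ∉ A ∧ j ∈ A), ∏ l ∈ A.erase j, x l := by
      intro g hg
      refine Finset.sum_congr rfl fun A hA => ?_
      simp only [Finset.mem_filter] at hA
      refine Finset.prod_congr rfl fun l hl => ?_
      have hl' := Finset.mem_erase.1 hl
      exact hg l (fun h => hA.2.1 (h ▸ hl'.2)) hl'.1
    have hswap := swap_sum k i j hij x
    rw [e10 x, e01 x, e10 y, e01 y, hyi, hyj,
      her10 y hyl, her01 y hyl, hswap, ← add_mul, ← add_mul, habsum]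
  linarith [h11, hmid, h00.le, h00.ge]

end MaclaurinAux

namespace MaclaurinAux

lemma maclaurin_aux : ∀ (N : ℕ) {n : ℕ} (k : ℕ) (x : Fin n → ℝ) (_ : ∀ l, 0 ≤ x l)
    (m : ℝ) (_ : 0 ≤ m) (_ : ∑ l, x l = n * m)
    (_ : ((Finset.univ : Finset (Fin n)).filter (fun l => x l ≠ m)).card ≤ N),
    ∑ A ∈ Finset.powersetCard k (Finset.univ : Finset (Fin n)), ∏ l ∈ A, x l
      ≤ (n.choose k : ℝ) * m ^ k := by
  intro N
  induction N with
  | zero =>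
    intro n k x hx m hm hsum hcard
    have hall : ∀ l, x l = m := by
      intro l
      by_contra h
      have : l ∈ (Finset.univ : Finset (Fin n)).filter (fun l => x l ≠ m) := by
        simp [h]
      have := Finset.card_pos.2 ⟨l, this⟩
      omega
    have : ∑ A ∈ Finset.powersetCard k (Finset.univ : Finset (Fin n)), ∏ l ∈ A, x l
        = (n.choose k : ℝ) * m ^ k := by
      have : ∀ A ∈ Finset.powersetCard k (Finset.univ : Finset (Fin n)),
          ∏ l ∈ A, x l = m ^ k := by
        intro A hA
        have hAk : A.card = k := (Finset.mem_powersetCard_univ.1 hA)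
        calc ∏ l ∈ A, x l = ∏ _l ∈ A, m := Finset.prod_congr rfl fun l _ => hall l
          _ = m ^ k := by rw [Finset.prod_const, hAk]
      rw [Finset.sum_congr rfl this, Finset.sum_const, nsmul_eq_mul,
        Finset.card_powersetCard, Finset.card_univ, Fintype.card_fin]
    linarith [this]
  | succ N ih =>
    intro n k x hx m hm hsum hcard
    by_cases hle : ((Finset.univ : Finset (Fin n)).filter (fun l => x l ≠ m)).card ≤ N
    · exact ih k x hx m hm hsum hle
    · -- there is a bad index; find p with x p < m and q with m < x q
      have hne : ((Finset.univ : Finset (Fin n)).filter (fun l => x l ≠ m)).Nonempty := by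
        rw [← Finset.card_pos]; omega
      obtain ⟨i0, hi0⟩ := hne
      have hi0' : x i0 ≠ m := (Finset.mem_filter.1 hi0).2
      have hconst : ∑ _l : Fin n, m = (n : ℝ) * m := by
        rw [Finset.sum_const, Finset.card_univ, Fintype.card_fin, nsmul_eq_mul]
      have hexlt : ∃ p, x p < m := by
        by_contra h
        push_neg at h
        rcases lt_or_gt_of_ne hi0' with hlt | hgt
        · exact absurd hlt (not_lt.2 (h i0))
        · have : (n : ℝ) * m < ∑ l, x l := by
            rw [← hconst]
            exact Finset.sum_lt_sum (fun l _ => h l) ⟨i0, Finset.mem_univ _, hgt⟩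
          linarith [hsum]
      have hexgt : ∃ q, m < x q := by
        by_contra h
        push_neg at h
        obtain ⟨p, hp⟩ := hexlt
        have : ∑ l, x l < (n : ℝ) * m := by
          rw [← hconst]
          exact Finset.sum_lt_sum (fun l _ => h l) ⟨p, Finset.mem_univ _, hp⟩
        linarith [hsum]
      obtain ⟨p, hp⟩ := hexlt
      obtain ⟨q, hq⟩ := hexgt
      have hpq : p ≠ q := by rintro rfl; linarith
      set b : ℝ := x p + x q - m with hb
      set y := Function.update (Function.update x p m) q b with hy
      have hyp : y p = m := by
        rw [hy, Function.update_of_ne hpq, Function.update_self]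
      have hyq : y q = b := by rw [hy, Function.update_self]
      have hyl : ∀ l, l ≠ p → l ≠ q → y l = x l := by
        intro l h1 h2
        rw [hy, Function.update_of_ne h2, Function.update_of_ne h1]
      have hkey := key_step k p q hpq x hx m b (by nlinarith) (by ring)
      rw [← hy] at hkey
      have hynn : ∀ l, 0 ≤ y l := by
        intro l
        by_cases h1 : l = p
        · rw [h1, hyp]; exact hm
        by_cases h2 : l = q
        · rw [h2, hyq, hb]; linarith [hx p]
        · rw [hyl l h1 h2]; exact hx l
      have hsumy : ∑ l, y l = (n : ℝ) * m := by
        have h1 : ∑ l, y l = y q + ∑ l ∈ Finset.univ.erase q, y l :=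
          (Finset.add_sum_erase _ y (Finset.mem_univ q)).symm
        have hpmem : p ∈ Finset.univ.erase q := Finset.mem_erase.2 ⟨hpq, Finset.mem_univ _⟩
        have h2 : ∑ l ∈ Finset.univ.erase q, y l
            = y p + ∑ l ∈ (Finset.univ.erase q).erase p, y l :=
          (Finset.add_sum_erase _ y hpmem).symm
        have h3 : ∑ l ∈ (Finset.univ.erase q).erase p, y l
            = ∑ l ∈ (Finset.univ.erase q).erase p, x l := by
          refine Finset.sum_congr rfl fun l hl => ?_
          have hl' := Finset.mem_erase.1 hl
          have hl'' := Finset.mem_erase.1 hl'.2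
          exact hyl l hl'.1 hl''.1
        have h4 : ∑ l, x l = x q + (x p + ∑ l ∈ (Finset.univ.erase q).erase p, x l) := by
          rw [Finset.add_sum_erase _ x hpmem, Finset.add_sum_erase _ x (Finset.mem_univ q)]
        rw [h1, h2, h3, hyp, hyq, hb]
        rw [h4] at hsum
        linarith [hsum]
      have hsub : (Finset.univ : Finset (Fin n)).filter (fun l => y l ≠ m)
          ⊆ ((Finset.univ : Finset (Fin n)).filter (fun l => x l ≠ m)).erase p := by
        intro l hl
        have hl' : y l ≠ m := (Finset.mem_filter.1 hl).2
        have hlp : l ≠ p := by rintro rfl; exact hl' hyp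
        refine Finset.mem_erase.2 ⟨hlp, Finset.mem_filter.2 ⟨Finset.mem_univ _, ?_⟩⟩
        by_cases h2 : l = q
        · rw [h2]; exact ne_of_gt hq
        · rw [← hyl l hlp h2]; exact hl'
      have hpbad : p ∈ (Finset.univ : Finset (Fin n)).filter (fun l => x l ≠ m) := by
        simp [ne_of_lt hp]
      have hcardy : ((Finset.univ : Finset (Fin n)).filter (fun l => y l ≠ m)).card ≤ N := by
        have := Finset.card_le_card hsub
        rw [Finset.card_erase_of_mem hpbad] at this
        have hppos := Finset.card_pos.2 ⟨p, hpbad⟩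
        omega
      exact le_trans hkey (ih k y hynn m hm hsumy hcardy)

end MaclaurinAux


/-- If `F` is convex on `[0,α]` with `F 0 = 0` and `F ≤ 1` there (a CDF-type function),
`G = 1 - F`, and `0 ≤ u i ≤ α` with `∑ u i = s ≤ α·n`, then the normalized `k`-th
elementary symmetric function of the values `G (u i)` is at most `G (s/n) ^ k`;
in particular the maximum is attained when all `u i` are equal to `s/n`. -/
theorem esymm_G_le_of_convex (α : ℝ) (hα : 0 < α) (F : ℝ → ℝ)
    (hF : ConvexOn ℝ (Set.Icc 0 α) F) (hF0 : F 0 = 0)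
    (hF1 : ∀ x ∈ Set.Icc 0 α, F x ≤ 1)
    (n k : ℕ) (hk : 1 ≤ k) (hkn : k ≤ n)
    (u : Fin n → ℝ) (hu : ∀ i, u i ∈ Set.Icc 0 α)
    (s : ℝ) (hs : ∑ i, u i = s) (hsn : s ≤ α * n) :
    (∑ A ∈ Finset.powersetCard k (Finset.univ : Finset (Fin n)),
        ∏ i ∈ A, (1 - F (u i))) / (Nat.choose n k : ℝ)
      ≤ (1 - F (s / n)) ^ k := by
  have hn : 0 < n := lt_of_lt_of_le hk hkn
  have hnR : (0 : ℝ) < n := by exact_mod_cast hn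
  set x : Fin n → ℝ := fun i => 1 - F (u i) with hxdef
  have hx : ∀ i, 0 ≤ x i := fun i => by
    have := hF1 (u i) (hu i)
    simp only [hxdef]; linarith
  set m : ℝ := (∑ i, x i) / n with hm
  have hm0 : 0 ≤ m := div_nonneg (Finset.sum_nonneg fun i _ => hx i) hnR.le
  have hsum : ∑ i, x i = (n : ℝ) * m := by
    rw [hm]; field_simp
  have hmac := MaclaurinAux.maclaurin_aux
    ((Finset.univ : Finset (Fin n)).filter (fun l => x l ≠ m)).card
    k x hx m hm0 hsum le_rfl
  -- Jensen for convex F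
  have hsnonneg : 0 ≤ s := hs ▸ Finset.sum_nonneg fun i _ => (hu i).1
  have hsnIcc : s / n ∈ Set.Icc 0 α := by
    constructor
    · positivity
    · rw [div_le_iff₀ hnR]; linarith [hsn]
  have hw : ∑ _i : Fin n, ((n : ℝ)⁻¹) = 1 := by
    rw [Finset.sum_const, Finset.card_univ, Fintype.card_fin, nsmul_eq_mul]
    field_simp
  have hjensen : F (s / n) ≤ ∑ i, ((n : ℝ)⁻¹) • F (u i) := by
    have := hF.map_sum_le (t := Finset.univ) (w := fun _ => (n : ℝ)⁻¹) (p := u)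
      (fun i _ => by positivity) hw (fun i _ => hu i)
    have heq : ∑ i, ((n : ℝ)⁻¹) • u i = s / n := by
      simp only [smul_eq_mul, ← Finset.mul_sum, hs]
      ring
    rwa [heq] at this
  have hmG : m ≤ 1 - F (s / n) := by
    have h1 : ∑ i, ((n : ℝ)⁻¹) • F (u i) = (∑ i, F (u i)) / n := by
      simp only [smul_eq_mul, ← Finset.mul_sum]
      ring
    have h2 : m = 1 - (∑ i, F (u i)) / n := by
      rw [hm, hxdef]
      rw [Finset.sum_sub_distrib, Finset.sum_const, Finset.card_univ, Fintype.card_fin,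
        nsmul_eq_mul, mul_one]
      field_simp
    rw [h2]
    rw [h1] at hjensen
    linarith
  have hpow : m ^ k ≤ (1 - F (s / n)) ^ k := pow_le_pow_left₀ hm0 hmG k
  have hchoose : (0 : ℝ) < (n.choose k : ℝ) := by
    exact_mod_cast Nat.choose_pos hkn
  rw [div_le_iff₀ hchoose]
  calc ∑ A ∈ Finset.powersetCard k (Finset.univ : Finset (Fin n)), ∏ i ∈ A, (1 - F (u i))
      = ∑ A ∈ Finset.powersetCard k (Finset.univ : Finset (Fin n)), ∏ i ∈ A, x i := rfl
    _ ≤ (n.choose k : ℝ) * m ^ k := hmac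
    _ ≤ (n.choose k : ℝ) * (1 - F (s / n)) ^ k := by
        exact mul_le_mul_of_nonneg_left hpow hchoose.le
    _ = (1 - F (s / n)) ^ k * (n.choose k : ℝ) := by ring
end

section
/- Fix integers ℓ ≥ 1, a with 0 ≤ a < ℓ, and real β ≥ 0. Then lim_{k→∞} (1/k) Σ_{b=0}^{k-ℓ} [C(k-ℓ, b)/C(k-1, a+b)] · (1 - β/k)^b = ∫_0^1 t^a (1-t)^{ℓ-1-a} e^{-βt} dt. -/
open Finset Filter

lemma prod_fac (m n : ℕ) :
    m.factorial * ∏ j ∈ Finset.range (n + 1), (m + 1 + j) = (m + n + 1).factorial := by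
  induction n with
  | zero => simp [Nat.factorial_succ, Nat.mul_comm]
  | succ n ih =>
      rw [Finset.prod_range_succ, ← Nat.mul_assoc, ih,
        show m + (n+1) + 1 = (m + n + 1) + 1 by omega, Nat.factorial_succ, Nat.mul_comm]
      congr 1
      omega

lemma beta_nat (m n : ℕ) :
    ∫ t in (0:ℝ)..1, t ^ m * (1 - t) ^ n
      = (m.factorial * n.factorial : ℝ) / ((m + n + 1).factorial) := by
  have hu : 0 < Complex.re ((m : ℂ) + 1) := by simp; positivity
  have h := Complex.betaIntegral_eval_nat_add_one_right hu n
  rw [Complex.betaIntegral] at h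
  simp only [add_sub_cancel_right] at h
  have h2 : ∀ x : ℝ, (x:ℂ) ^ (m:ℂ) * (1 - (x:ℂ)) ^ (n:ℂ) = ((x ^ m * (1-x) ^ n : ℝ) : ℂ) := by
    intro x
    rw [Complex.cpow_natCast, show ((1:ℂ) - x) = ((1 - x : ℝ) : ℂ) by push_cast; ring,
      Complex.cpow_natCast]
    push_cast; ring
  simp only [h2] at h
  rw [intervalIntegral.integral_ofReal] at h
  have h3 : (∏ j ∈ Finset.range (n + 1), ((m:ℂ) + 1 + j))
      = ((∏ j ∈ Finset.range (n + 1), (m + 1 + j) : ℕ) : ℂ) := by push_cast; ring_nf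
  rw [h3] at h
  have h4 : (∫ t in (0:ℝ)..1, t ^ m * (1 - t) ^ n)
      = (n.factorial : ℝ) / ((∏ j ∈ Finset.range (n + 1), (m + 1 + j) : ℕ) : ℝ) := by
    refine Complex.ofReal_inj.mp (h.trans ?_)
    push_cast
    ring
  rw [h4, div_eq_div_iff (by positivity) (by positivity)]
  push_cast [← prod_fac m n]
  ring

lemma sum_eq_integral (ℓ a : ℕ) (hℓ : 1 ≤ ℓ) (ha : a < ℓ) (β : ℝ) (k : ℕ) (hk : ℓ ≤ k) :
    (1 / (k : ℝ)) * ∑ b ∈ Finset.range (k - ℓ + 1),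
        ((Nat.choose (k - ℓ) b : ℝ) / (Nat.choose (k - 1) (a + b) : ℝ)) * (1 - β / (k : ℝ)) ^ b
      = ∫ t in (0:ℝ)..1, t ^ a * (1 - t) ^ (ℓ - 1 - a) * (1 - β * t / k) ^ (k - ℓ) := by
  have hk1 : 1 ≤ k := le_trans hℓ hk
  have hkR : (0:ℝ) < k := by exact_mod_cast hk1
  have key : ∀ t : ℝ, t ^ a * (1 - t) ^ (ℓ - 1 - a) * (1 - β * t / k) ^ (k - ℓ)
      = ∑ b ∈ Finset.range (k - ℓ + 1), (Nat.choose (k - ℓ) b : ℝ) * (1 - β / k) ^ b *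
          (t ^ (a + b) * (1 - t) ^ (k - 1 - (a + b))) := by
    intro t
    have h1 : (1 - β * t / k) = (t * (1 - β / k)) + (1 - t) := by field_simp; ring
    rw [h1, add_pow, Finset.mul_sum]
    refine Finset.sum_congr rfl fun b hb => ?_
    have hb' : b ≤ k - ℓ := Nat.lt_succ_iff.mp (Finset.mem_range.mp hb)
    have e1 : k - 1 - (a + b) = (ℓ - 1 - a) + (k - ℓ - b) := by omega
    rw [e1, pow_add, mul_pow, pow_add]
    ring
  rw [intervalIntegral.integral_congr (g := fun t => ∑ b ∈ Finset.range (k - ℓ + 1),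
      (Nat.choose (k - ℓ) b : ℝ) * (1 - β / k) ^ b * (t ^ (a + b) * (1 - t) ^ (k - 1 - (a + b))))
      (fun t _ => key t)]
  rw [intervalIntegral.integral_finset_sum (fun b _ => (Continuous.intervalIntegrable (by fun_prop) _ _))]
  simp_rw [intervalIntegral.integral_const_mul, beta_nat, Finset.mul_sum]
  refine Finset.sum_congr rfl fun b hb => ?_
  have hb' : b ≤ k - ℓ := Nat.lt_succ_iff.mp (Finset.mem_range.mp hb)
  have hab : a + b ≤ k - 1 := by omega
  have e2 : a + b + (k - 1 - (a + b)) + 1 = k := by omega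
  rw [e2, Nat.cast_choose ℝ hab]
  have hkfac : (k.factorial : ℝ) = k * (k-1).factorial := by
    rw [show k = (k-1)+1 by omega, Nat.factorial_succ]
    push_cast [show (k-1)+1 = k by omega]
    ring
  rw [hkfac]
  have f1 : ((a+b).factorial : ℝ) ≠ 0 := by positivity
  have f2 : ((k-1-(a+b)).factorial : ℝ) ≠ 0 := by positivity
  have f3 : ((k-1).factorial : ℝ) ≠ 0 := by positivity
  field_simp

lemma pow_lim (c : ℝ) (hc : 0 ≤ c) (ℓ : ℕ) :
    Tendsto (fun k : ℕ => ((1:ℝ) - c / k) ^ (k - ℓ)) atTop (nhds (Real.exp (-c))) := by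
  have hden : Tendsto (fun k : ℕ => ((1:ℝ) - c / k) ^ ℓ) atTop (nhds 1) := by
    have h0 : Tendsto (fun k : ℕ => (1:ℝ) - c / k) atTop (nhds 1) := by
      have h1 := tendsto_const_div_atTop_nhds_zero_nat c
      have h : Tendsto (fun k : ℕ => (1:ℝ) - c / k) atTop (nhds (1 - 0)) :=
        tendsto_const_nhds.sub h1
      simpa using h
    simpa using h0.pow ℓ
  have hnum : Tendsto (fun k : ℕ => ((1:ℝ) - c / k) ^ k) atTop (nhds (Real.exp (-c))) := by
    have := Real.tendsto_one_add_div_pow_exp (-c)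
    refine this.congr fun k => ?_
    rw [sub_eq_add_neg, neg_div, ← neg_div]
  have hdiv := hnum.div hden one_ne_zero
  rw [div_one] at hdiv
  refine hdiv.congr' ?_
  filter_upwards [eventually_ge_atTop ℓ, eventually_gt_atTop ⌈c⌉₊] with k hkℓ hkc
  have hkpos : (0:ℝ) < k := by
    have : (0:ℕ) < k := lt_of_le_of_lt (Nat.zero_le _) hkc
    exact_mod_cast this
  have hck : c / k < 1 := by
    rw [div_lt_one hkpos]
    calc c ≤ ⌈c⌉₊ := Nat.le_ceil c
    _ < k := by exact_mod_cast hkc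
  have hx : (1:ℝ) - c / k ≠ 0 := by nlinarith
  simp only [Pi.div_apply]
  rw [pow_sub₀ _ hx hkℓ]
  rw [div_eq_mul_inv]

lemma tendsto_int (ℓ a : ℕ) (hℓ : 1 ≤ ℓ) (ha : a < ℓ) (β : ℝ) (hβ : 0 ≤ β) :
    Tendsto (fun k : ℕ =>
        ∫ t in (0:ℝ)..1, t ^ a * (1 - t) ^ (ℓ - 1 - a) * (1 - β * t / k) ^ (k - ℓ))
      atTop (nhds (∫ t in (0:ℝ)..1, t ^ a * (1 - t) ^ (ℓ - 1 - a) * Real.exp (-β * t))) := by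
  apply intervalIntegral.tendsto_integral_filter_of_dominated_convergence
    (bound := fun t => |t| ^ a * |1 - t| ^ (ℓ - 1 - a))
  · filter_upwards with k
    exact (Continuous.aestronglyMeasurable (by fun_prop))
  · filter_upwards [eventually_ge_atTop ⌈β⌉₊, eventually_ge_atTop 1] with k hk hk1
    filter_upwards with t ht
    rw [Set.uIoc_of_le (by norm_num : (0:ℝ) ≤ 1), Set.mem_Ioc] at ht
    have hk' : β ≤ k := le_trans (Nat.le_ceil β) (by exact_mod_cast hk)
    have hkpos : (0:ℝ) < k := by exact_mod_cast hk1
    have h1 : 0 ≤ β * t / k := div_nonneg (mul_nonneg hβ ht.1.le) hkpos.le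
    have h2 : β * t / k ≤ 1 := by
      rw [div_le_one hkpos]
      nlinarith [ht.1, ht.2]
    rw [Real.norm_eq_abs, abs_mul, abs_mul, abs_pow, abs_pow, abs_pow]
    calc |t| ^ a * |1 - t| ^ (ℓ - 1 - a) * |1 - β * t / ↑k| ^ (k - ℓ)
        ≤ |t| ^ a * |1 - t| ^ (ℓ - 1 - a) * 1 := by
          refine mul_le_mul_of_nonneg_left ?_ (by positivity)
          exact pow_le_one₀ (abs_nonneg _) (abs_le.mpr ⟨by linarith, by linarith⟩)
      _ = |t| ^ a * |1 - t| ^ (ℓ - 1 - a) := mul_one _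
  · exact Continuous.intervalIntegrable (by fun_prop) _ _
  · filter_upwards with t ht
    rw [Set.uIoc_of_le (by norm_num : (0:ℝ) ≤ 1), Set.mem_Ioc] at ht
    have := pow_lim (β * t) (by nlinarith [ht.1]) ℓ
    have h := (tendsto_const_nhds (x := t ^ a * (1 - t) ^ (ℓ - 1 - a))).mul this
    rw [show Real.exp (-(β * t)) = Real.exp (-β * t) by ring_nf] at h
    exact h

/-- The limit `lim_{k→∞} (1/k) Σ_{b=0}^{k-ℓ} [C(k-ℓ,b)/C(k-1,a+b)] (1-β/k)^b
  = ∫_0^1 t^a (1-t)^{ℓ-1-a} e^{-βt} dt`. -/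
theorem tendsto_choose_ratio_sum (ℓ a : ℕ) (hℓ : 1 ≤ ℓ) (ha : a < ℓ) (β : ℝ) (hβ : 0 ≤ β) :
    Tendsto (fun k : ℕ =>
        (1 / (k : ℝ)) * ∑ b ∈ Finset.range (k - ℓ + 1),
          ((Nat.choose (k - ℓ) b : ℝ) / (Nat.choose (k - 1) (a + b) : ℝ)) *
            (1 - β / (k : ℝ)) ^ b)
      atTop
      (nhds (∫ t in (0 : ℝ)..1, t ^ a * (1 - t) ^ (ℓ - 1 - a) * Real.exp (-β * t))) := by
  refine (tendsto_int ℓ a hℓ ha β hβ).congr' ?_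
  filter_upwards [eventually_ge_atTop ℓ] with k hk
  exact (sum_eq_integral ℓ a hℓ ha β k hk).symm
end

section
/- Single Threshold cut density bound: let f be a density on [0,1], k ≥ 2, and (u_1,...,u_k) a simplex point with u_1 ≤ u_2. Define d^{ST(f),1}_k(u) = (1 - 1/k)·f(u_1) if u_1 > u_i for all i ≥ 2, else f(u_1)/|{i ∈ [k] : u_i ≥ u_1}|; and d^{ST(f),2}_k(u) = (1 - 1/k)·f(u_2) if u_2 ≥ u_i for all i ≠ 2, else f(u_2)/(1 + |{i ∈ [k] : u_i > u_2}|). Then d^{ST(f),1}_k(u) + d^{ST(f),2}_k(u) ≤ (1/2)·f(u_1) + (1 - 1/k)·f(u_2). -/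
open Finset

/-- Single Threshold cut density bound: with `u_1 ≤ u_2` on a simplex point,
`d^{ST(f),1}(u) + d^{ST(f),2}(u) ≤ (1/2) f(u_1) + (1 - 1/k) f(u_2)`. -/
theorem st_density_bound (k : ℕ) (hk : 2 ≤ k) (f : ℝ → ℝ) (hf : ∀ x, 0 ≤ f x)
    (u : Fin k → ℝ) (hu : ∀ i, 0 ≤ u i) (husum : ∑ i, u i = 1) :
    let i0 : Fin k := ⟨0, by omega⟩
    let i1 : Fin k := ⟨1, by omega⟩
    let d1 : ℝ :=
      if ∀ i : Fin k, i ≠ i0 → u i < u i0 then (1 - 1 / (k : ℝ)) * f (u i0)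
      else f (u i0) / ((Finset.univ.filter fun i : Fin k => u i0 ≤ u i).card : ℝ)
    let d2 : ℝ :=
      if ∀ i : Fin k, i ≠ i1 → u i ≤ u i1 then (1 - 1 / (k : ℝ)) * f (u i1)
      else f (u i1) / (1 + ((Finset.univ.filter fun i : Fin k => u i1 < u i).card : ℝ))
    u i0 ≤ u i1 → d1 + d2 ≤ (1 / 2) * f (u i0) + (1 - 1 / (k : ℝ)) * f (u i1) := by
  intro i0 i1 d1 d2 h01
  have hi01 : i1 ≠ i0 := by simp [i0, i1, Fin.ext_iff]
  have hhalf : (1 : ℝ) / 2 ≤ 1 - 1 / (k : ℝ) := by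
    have hk2 : (2 : ℝ) ≤ (k : ℝ) := by exact_mod_cast hk
    have hkpos : (0 : ℝ) < (k : ℝ) := by linarith
    have : 1 / (k : ℝ) ≤ 1 / 2 := by
      apply div_le_div_of_nonneg_left (by norm_num) (by norm_num) hk2
    linarith
  have hd1 : d1 ≤ (1 / 2) * f (u i0) := by
    have hcond : ¬ ∀ i : Fin k, i ≠ i0 → u i < u i0 := by
      push_neg
      exact ⟨i1, hi01, not_lt.mp (not_lt.mpr h01)⟩
    have hsub : ({i0, i1} : Finset (Fin k)) ⊆
        Finset.univ.filter fun i : Fin k => u i0 ≤ u i := by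
      intro i hi
      simp only [Finset.mem_insert, Finset.mem_singleton] at hi
      rcases hi with rfl | rfl <;> simp [h01]
    have hcard : 2 ≤ ((Finset.univ.filter fun i : Fin k => u i0 ≤ u i).card : ℝ) := by
      have h2 : ({i0, i1} : Finset (Fin k)).card = 2 := by
        rw [Finset.card_insert_of_notMem (by simpa using hi01.symm)]
        simp
      have := Finset.card_le_card hsub
      rw [h2] at this
      exact_mod_cast this
    simp only [d1, if_neg hcond]
    rw [div_le_iff₀ (by linarith)]
    nlinarith [hf (u i0)]
  have hd2 : d2 ≤ (1 - 1 / (k : ℝ)) * f (u i1) := by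
    by_cases hc : ∀ i : Fin k, i ≠ i1 → u i ≤ u i1
    · simp only [d2]; rw [if_pos hc]
    · simp only [d2, if_neg hc]
      push_neg at hc
      obtain ⟨j, hj, hjlt⟩ := hc
      have hjmem : j ∈ Finset.univ.filter fun i : Fin k => u i1 < u i := by
        simp [hjlt]
      have hcard : 1 ≤ ((Finset.univ.filter fun i : Fin k => u i1 < u i).card : ℝ) := by
        have := Finset.card_pos.mpr ⟨j, hjmem⟩
        exact_mod_cast this
      have : f (u i1) / (1 + ((Finset.univ.filter fun i : Fin k => u i1 < u i).card : ℝ))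
          ≤ f (u i1) / 2 := by
        apply div_le_div_of_nonneg_left (hf _) (by norm_num) (by linarith)
      calc f (u i1) / (1 + ((Finset.univ.filter fun i : Fin k => u i1 < u i).card : ℝ))
          ≤ f (u i1) / 2 := this
        _ ≤ (1 - 1 / (k : ℝ)) * f (u i1) := by nlinarith [hf (u i1)]
  linarith
end

section
/- Descending Thresholds density prefix bound: let f be a density on [0,1] with CDF F, and define F(a,b) = F(b)-F(a) for a ≤ b. For 2 ≤ ℓ ≤ k, a simplex point (u_1,...,u_k) with 0 ≤ u_{ℓ+1},...,u_k ≤ α, and j ∈ {1,2}: f(u_j)·(∏_{i∈[k]: u_i ≥ u_j}(1 - F(u_j, u_i)) - ∏_{i∈[k], i≠j} F(max{u_j, u_i}, 1)) ≤ f(u_j)·(∏_{i∈[ℓ]: u_i ≥ u_j}(1 - F(u_j, u_i)) - ∏_{i∈[ℓ], i≠j} F(max{u_j, u_i}, 1)·F(max{u_j, α}, 1)^{k-ℓ}). -/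
open Finset

lemma card_filter_ge (k ℓ : ℕ) (hℓk : ℓ ≤ k) :
    (Finset.univ.filter (fun i : Fin k => ℓ ≤ (i : ℕ))).card = k - ℓ := by
  rcases eq_or_lt_of_le hℓk with h | h
  · subst h
    have : (Finset.univ.filter (fun i : Fin ℓ => ℓ ≤ (i : ℕ))) = ∅ := by
      ext i; simp [Nat.not_le.mpr i.isLt]
    simp [this]
  · have : (Finset.univ.filter (fun i : Fin k => ℓ ≤ (i : ℕ))) = Finset.Ici (⟨ℓ, h⟩ : Fin k) := by
      ext i; simp [Fin.le_def]
    rw [this, Fin.card_Ici]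

/-- Descending Thresholds prefix bound: for a CDF `F` (monotone with values in `[0,1]`),
a nonnegative density `f`, and a simplex point whose coordinates beyond the prefix
`(u_1,…,u_ℓ)` all lie in `[0,α]`, the DT cut-density factor for `j ∈ {1,2}` is bounded
by an expression depending only on the prefix (here `F(a,b) = F b - F a` and
`F(x,1) = 1 - F x`). -/
theorem dt_density_prefix_bound (α : ℝ) (hα : 0 < α) (f F : ℝ → ℝ)
    (hf : ∀ x, 0 ≤ f x) (hFmono : Monotone F) (hF01 : ∀ x, F x ∈ Set.Icc (0 : ℝ) 1)
    (k ℓ : ℕ) (hℓ : 2 ≤ ℓ) (hℓk : ℓ ≤ k)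
    (u : Fin k → ℝ) (hu : ∀ i, 0 ≤ u i) (husum : ∑ i, u i = 1)
    (htail : ∀ i : Fin k, ℓ ≤ (i : ℕ) → u i ∈ Set.Icc 0 α)
    (j : Fin k) (hj : (j : ℕ) < 2) :
    f (u j) *
        ((∏ i ∈ Finset.univ.filter (fun i : Fin k => u j ≤ u i),
            (1 - (F (u i) - F (u j)))) -
          ∏ i ∈ Finset.univ.erase j, (1 - F (max (u j) (u i)))) ≤
      f (u j) *
        ((∏ i ∈ Finset.univ.filter (fun i : Fin k => (i : ℕ) < ℓ ∧ u j ≤ u i),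
            (1 - (F (u i) - F (u j)))) -
          (∏ i ∈ Finset.univ.filter (fun i : Fin k => (i : ℕ) < ℓ ∧ i ≠ j),
            (1 - F (max (u j) (u i)))) * (1 - F (max (u j) α)) ^ (k - ℓ)) := by
  have hFnn : ∀ x, 0 ≤ F x := fun x => (hF01 x).1
  have hF1 : ∀ x, F x ≤ 1 := fun x => (hF01 x).2
  have hjℓ : (j : ℕ) < ℓ := lt_of_lt_of_le hj hℓ
  apply mul_le_mul_of_nonneg_left _ (hf (u j))
  -- A part
  have hA : (∏ i ∈ Finset.univ.filter (fun i : Fin k => u j ≤ u i),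
      (1 - (F (u i) - F (u j)))) ≤
      ∏ i ∈ Finset.univ.filter (fun i : Fin k => (i : ℕ) < ℓ ∧ u j ≤ u i),
      (1 - (F (u i) - F (u j))) := by
    set s := Finset.univ.filter (fun i : Fin k => (i : ℕ) < ℓ ∧ u j ≤ u i) with hs
    set t := Finset.univ.filter (fun i : Fin k => u j ≤ u i) with ht
    have hst : s ⊆ t := by
      intro i hi
      simp only [hs, ht, Finset.mem_filter, Finset.mem_univ, true_and] at hi ⊢
      exact hi.2
    have key : (∏ i ∈ t \ s, (1 - (F (u i) - F (u j)))) * ∏ i ∈ s, (1 - (F (u i) - F (u j)))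
        = ∏ i ∈ t, (1 - (F (u i) - F (u j))) := Finset.prod_sdiff hst
    have h1 : (∏ i ∈ t \ s, (1 - (F (u i) - F (u j)))) ≤ 1 := by
      apply Finset.prod_le_one
      · intro i hi
        have hui := (Finset.mem_filter.mp (Finset.mem_sdiff.mp hi).1).2
        have := hF1 (u i); have := hFnn (u j); linarith
      · intro i hi
        have hui := (Finset.mem_filter.mp (Finset.mem_sdiff.mp hi).1).2
        have := hFmono hui; linarith
    have h2 : 0 ≤ ∏ i ∈ s, (1 - (F (u i) - F (u j))) := by
      apply Finset.prod_nonneg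
      intro i hi
      have hui := (Finset.mem_filter.mp hi).2.2
      have := hF1 (u i); have := hFnn (u j); linarith
    calc ∏ i ∈ t, (1 - (F (u i) - F (u j)))
        = (∏ i ∈ t \ s, (1 - (F (u i) - F (u j)))) * ∏ i ∈ s, (1 - (F (u i) - F (u j))) :=
          key.symm
      _ ≤ 1 * ∏ i ∈ s, (1 - (F (u i) - F (u j))) := mul_le_mul_of_nonneg_right h1 h2
      _ = ∏ i ∈ s, (1 - (F (u i) - F (u j))) := one_mul _
  -- B part
  have hB : (∏ i ∈ Finset.univ.filter (fun i : Fin k => (i : ℕ) < ℓ ∧ i ≠ j),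
        (1 - F (max (u j) (u i)))) * (1 - F (max (u j) α)) ^ (k - ℓ) ≤
      ∏ i ∈ Finset.univ.erase j, (1 - F (max (u j) (u i))) := by
    set s1 := Finset.univ.filter (fun i : Fin k => (i : ℕ) < ℓ ∧ i ≠ j) with hs1
    set s2 := Finset.univ.filter (fun i : Fin k => ℓ ≤ (i : ℕ)) with hs2
    have hdisj : Disjoint s1 s2 := by
      rw [Finset.disjoint_left]
      intro i hi1 hi2
      simp only [hs1, hs2, Finset.mem_filter, Finset.mem_univ, true_and] at hi1 hi2
      omega
    have hsplit : Finset.univ.erase j = s1 ∪ s2 := by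
      ext i
      simp only [hs1, hs2, Finset.mem_erase, Finset.mem_union, Finset.mem_filter,
        Finset.mem_univ, true_and, and_true]
      constructor
      · intro hij
        rcases lt_or_ge (i : ℕ) ℓ with h | h
        · exact Or.inl ⟨h, hij⟩
        · exact Or.inr h
      · rintro (⟨_, hij⟩ | h)
        · exact hij
        · intro hij; subst hij; omega
    have hprod : ∏ i ∈ Finset.univ.erase j, (1 - F (max (u j) (u i))) =
        (∏ i ∈ s1, (1 - F (max (u j) (u i)))) * ∏ i ∈ s2, (1 - F (max (u j) (u i))) := by
      rw [hsplit, Finset.prod_union hdisj]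
    have hcnn : 0 ≤ 1 - F (max (u j) α) := by have := hF1 (max (u j) α); linarith
    have h2 : (1 - F (max (u j) α)) ^ (k - ℓ) ≤ ∏ i ∈ s2, (1 - F (max (u j) (u i))) := by
      rw [← card_filter_ge k ℓ hℓk, ← Finset.prod_const]
      apply Finset.prod_le_prod
      · intro i hi; exact hcnn
      · intro i hi
        have hiℓ : ℓ ≤ (i : ℕ) := (Finset.mem_filter.mp hi).2
        have huiα : u i ≤ α := (htail i hiℓ).2
        have : max (u j) (u i) ≤ max (u j) α := max_le_max le_rfl huiα
        have := hFmono this; linarith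
    have h1 : 0 ≤ ∏ i ∈ s1, (1 - F (max (u j) (u i))) := by
      apply Finset.prod_nonneg
      intro i hi
      have := hF1 (max (u j) (u i)); linarith
    calc (∏ i ∈ s1, (1 - F (max (u j) (u i)))) * (1 - F (max (u j) α)) ^ (k - ℓ)
        ≤ (∏ i ∈ s1, (1 - F (max (u j) (u i)))) * ∏ i ∈ s2, (1 - F (max (u j) (u i))) :=
          mul_le_mul_of_nonneg_left h2 h1
      _ = ∏ i ∈ Finset.univ.erase j, (1 - F (max (u j) (u i))) := hprod.symm
  linarith
end
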